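/- arXiv:2211.06455 — 2 statements merged into one kernel-verified Lean document; each statement's English description precedes it below -/
import Mathlib

section
/- Define W : R³ → R⁵ by W(θ₁,θ₂,θ₃) = (θ₁, θ₂, θ₁θ₂, θ₁θ₃, θ₁θ₂θ₃). Suppose θ₁ ≠ 0 and |θ₃| ≤ K. Then there exist α > 0 and ρ > 0 such that, with T = [[α,0,0,0,0],[0,α,0,0,0],[0,0,0,sign(θ₁),0]], the matrix T·∇W(θ) + (∇W(θ))^T T^T is ≥ ρ I₃ at the given θ. -/
open Matrix

/-- Jacobian of `W(θ₁,θ₂,θ₃) = (θ₁, θ₂, θ₁θ₂, θ₁θ₃, θ₁θ₂θ₃)` at `θ`. -/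
noncomputable def jacW (θ : Fin 3 → ℝ) : Matrix (Fin 5) (Fin 3) ℝ :=
  !![1, 0, 0;
     0, 1, 0;
     θ 1, θ 0, 0;
     θ 2, 0, θ 0;
     θ 1 * θ 2, θ 0 * θ 2, θ 0 * θ 1]

/-!
With `s = sign θ₁`, the product `T ∇W(θ)` is lower triangular with diagonal `(α, α, s θ₁)` and a
single off-diagonal entry `s θ₃`, so in the symmetrised matrix minus `ρ I₃` the second coordinate
decouples and positivity reduces to a `2 × 2` determinant condition. Taking `ρ = s θ₁ = |θ₁|` and
`α = θ₃² / (2|θ₁|) + |θ₁|`, that determinant is `θ₃² + θ₁² - s²θ₃² ≥ θ₁² > 0`.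
-/

theorem posSemidef_of_sq_le_mul {a b c d : ℝ} (ha : 0 < a) (hd : 0 ≤ d) (hb : b ^ 2 ≤ a * c) :
    (!![a, 0, b; 0, d, 0; b, 0, c] : Matrix (Fin 3) (Fin 3) ℝ).PosSemidef := by
  rw [posSemidef_iff_dotProduct_mulVec]
  refine ⟨by ext i j; fin_cases i <;> fin_cases j <;> rfl, fun x => ?_⟩
  simp only [dotProduct, Pi.star_apply, star_trivial, mulVec, of_apply, cons_val',
    cons_val_fin_one, Fin.sum_univ_three, Fin.isValue, cons_val_zero, cons_val_one, cons_val,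
    zero_mul, add_zero, zero_add]
  refine nonneg_of_mul_nonneg_right ?_ ha
  -- `a` times the quadratic form is `(a x₀ + b x₂)² + (ac - b²) x₂² + a d x₁²`
  nlinarith [sq_nonneg (a * x 0 + b * x 2), mul_nonneg (sub_nonneg.2 hb) (sq_nonneg (x 2)),
    mul_nonneg (mul_nonneg ha.le hd) (sq_nonneg (x 1))]

theorem gain_mul_jacW_symm_sub_smul_one (θ : Fin 3 → ℝ) (α s ρ : ℝ) :
    (!![α, 0, 0, 0, 0; 0, α, 0, 0, 0; 0, 0, 0, s, 0] : Matrix (Fin 3) (Fin 5) ℝ) * jacW θ +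
        (jacW θ)ᵀ * (!![α, 0, 0, 0, 0; 0, α, 0, 0, 0; 0, 0, 0, s, 0] : Matrix (Fin 3) (Fin 5) ℝ)ᵀ -
        ρ • (1 : Matrix (Fin 3) (Fin 3) ℝ) =
      !![2 * α - ρ, 0, s * θ 2; 0, 2 * α - ρ, 0; s * θ 2, 0, 2 * (s * θ 0) - ρ] := by
  ext i j
  fin_cases i <;> fin_cases j <;>
    simp [jacW, mul_apply, Fin.sum_univ_five, one_apply] <;> ring

theorem statement3_general (θ : Fin 3 → ℝ) (hθ1 : θ 0 ≠ 0) :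
    ∃ α : ℝ, 0 < α ∧ ∃ ρ : ℝ, 0 < ρ ∧
      ((!![α, 0, 0, 0, 0;
           0, α, 0, 0, 0;
           0, 0, 0, Real.sign (θ 0), 0] : Matrix (Fin 3) (Fin 5) ℝ) * jacW θ +
        (jacW θ)ᵀ * (!![α, 0, 0, 0, 0;
           0, α, 0, 0, 0;
           0, 0, 0, Real.sign (θ 0), 0] : Matrix (Fin 3) (Fin 5) ℝ)ᵀ -
        ρ • (1 : Matrix (Fin 3) (Fin 3) ℝ)).PosSemidef := by
  set s := Real.sign (θ 0)
  have hs : s ^ 2 ≤ 1 := by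
    rcases Real.sign_apply_eq_of_ne_zero _ hθ1 with h | h <;> simp [s, h]
  obtain ⟨c, hc_eq⟩ : ∃ c, s * θ 0 = c := ⟨_, rfl⟩
  have hc : 0 < c := hc_eq ▸ Real.sign_mul_pos_of_ne_zero _ hθ1
  refine ⟨θ 2 ^ 2 / (2 * c) + c, by positivity, c, hc, ?_⟩
  rw [gain_mul_jacW_symm_sub_smul_one, hc_eq]
  have ha : 2 * (θ 2 ^ 2 / (2 * c) + c) - c = θ 2 ^ 2 / c + c := by field_simp; ring
  rw [ha, show 2 * c - c = c by ring]
  refine posSemidef_of_sq_le_mul (by positivity) (by positivity) ?_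
  rw [add_mul, div_mul_cancel₀ _ hc.ne', mul_pow]
  nlinarith [mul_le_mul_of_nonneg_right hs (sq_nonneg (θ 2)), sq_nonneg c]

theorem statement3 (θ : Fin 3 → ℝ) (K : ℝ) (hθ1 : θ 0 ≠ 0) (hθ3 : |θ 2| ≤ K) :
    ∃ α : ℝ, 0 < α ∧ ∃ ρ : ℝ, 0 < ρ ∧
      ((!![α, 0, 0, 0, 0;
           0, α, 0, 0, 0;
           0, 0, 0, Real.sign (θ 0), 0] : Matrix (Fin 3) (Fin 5) ℝ) * jacW θ +
        (jacW θ)ᵀ * (!![α, 0, 0, 0, 0;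
           0, α, 0, 0, 0;
           0, 0, 0, Real.sign (θ 0), 0] : Matrix (Fin 3) (Fin 5) ℝ)ᵀ -
        ρ • (1 : Matrix (Fin 3) (Fin 3) ℝ)).PosSemidef :=
  statement3_general θ hθ1
end

section
/- Let φ : [0,∞) → R^s be continuous with ∫₀^{t_c} φφ^T ds ≥ C_c I_s (C_c, t_c > 0), and let F solve Ḟ = −γFφφ^TF, F(0) = (1/f₀)I_s with γ, f₀ > 0. Then for t ≥ t_c, the smallest eigenvalue of I_s − f₀F(t) is at least γC_c/(f₀ + γC_c), and consequently Δ(t) = det(I_s − f₀F(t)) ≥ (γC_c/(f₀+γC_c))^s > 0. -/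
/-!
Put `B(t) = f₀ I + γ ∫₀ᵗ φ φᵀ`, so that `B' = γ φ φᵀ` and `F(0) B(0) = I`. Along the Riccati flow
`(F B - I)' = -γ F φ φᵀ (F B - I)`, a linear equation with zero initial value, so Grönwall's
inequality gives `F(t) = B(t)⁻¹` for `t ≥ 0`. For `t ≥ t_c` the excitation condition gives
`B(t) ≥ (f₀ + γ C_c) I`, and inversion reverses the Loewner order, so `F(t) ≤ (f₀ + γ C_c)⁻¹ I`,
i.e. `I - f₀ F(t) ≥ γ C_c / (f₀ + γ C_c) · I`. Every eigenvalue of the symmetric matrix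
`I - f₀ F(t)` is then at least `γ C_c / (f₀ + γ C_c)`, which bounds the determinant.
-/

open Matrix Set
open scoped Matrix.Norms.Elementwise

namespace Matrix

theorem norm_mul_le_card_mul {l m n α : Type*} [Fintype l] [Fintype m] [Fintype n]
    [NonUnitalSeminormedRing α] (A : Matrix l m α) (B : Matrix m n α) :
    ‖A * B‖ ≤ Fintype.card m * (‖A‖ * ‖B‖) := by
  refine (norm_le_iff (by positivity)).2 fun i j => ?_
  calc ‖(A * B) i j‖ = ‖∑ k, A i k * B k j‖ := rfl
    _ ≤ ∑ k, ‖A i k * B k j‖ := norm_sum_le _ _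
    _ ≤ ∑ _k : m, ‖A‖ * ‖B‖ := Finset.sum_le_sum fun k _ =>
        (norm_mul_le _ _).trans (mul_le_mul (norm_entry_le_entrywise_sup_norm A)
          (norm_entry_le_entrywise_sup_norm B) (norm_nonneg _) (norm_nonneg _))
    _ = Fintype.card m * (‖A‖ * ‖B‖) := by simp

end Matrix

section Calculus

variable {𝕜 : Type*} [NontriviallyNormedField 𝕜] {l m n : Type*} {s : Set 𝕜} {t : 𝕜}

theorem hasDerivWithinAt_matrix [Fintype m] [Fintype n] {A : 𝕜 → Matrix m n 𝕜}
    {A' : Matrix m n 𝕜} :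
    HasDerivWithinAt A A' s t ↔ ∀ i j, HasDerivWithinAt (fun τ => A τ i j) (A' i j) s t :=
  (hasDerivWithinAt_pi (φ := A)).trans
    (forall_congr' fun i => hasDerivWithinAt_pi (φ := fun τ => A τ i))

theorem HasDerivWithinAt.matrix_mul [Fintype l] [Fintype m] [Fintype n]
    {A : 𝕜 → Matrix l m 𝕜} {B : 𝕜 → Matrix m n 𝕜} {A' : Matrix l m 𝕜} {B' : Matrix m n 𝕜}
    (hA : HasDerivWithinAt A A' s t) (hB : HasDerivWithinAt B B' s t) :
    HasDerivWithinAt (fun τ => A τ * B τ) (A' * B t + A t * B') s t := by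
  rw [hasDerivWithinAt_matrix] at hA hB ⊢
  intro i j
  simp only [mul_apply, Matrix.add_apply, ← Finset.sum_add_distrib]
  exact HasDerivWithinAt.fun_sum fun k _ => (hA i k).mul (hB k j)

end Calculus

theorem mul_eq_one_of_hasDerivWithinAt_riccati {n : Type*} [Fintype n] [DecidableEq n]
    {F A B : ℝ → Matrix n n ℝ} {a : ℝ} (hA : ContinuousOn A (Ici a))
    (hF : ∀ t ∈ Ici a, HasDerivWithinAt F (-(F t * A t * F t)) (Ici a) t)
    (hB : ∀ t ∈ Ici a, HasDerivWithinAt B (A t) (Ici a) t) (h₀ : F a * B a = 1) :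
    ∀ t ∈ Ici a, F t * B t = 1 := by
  intro b hb
  have hFc : ContinuousOn F (Icc a b) := fun t ht =>
    (hF t ht.1).continuousWithinAt.mono Icc_subset_Ici_self
  -- `F B - 1` solves the linear equation `X' = -(F A) X` and vanishes at `a`.
  have hG : ∀ t ∈ Ici a, HasDerivWithinAt (fun τ => F τ * B τ - 1)
      (-(F t * A t) * (F t * B t - 1)) (Ici a) t := fun t ht =>
    (((hF t ht).matrix_mul (hB t ht)).sub_const 1).congr_deriv (by noncomm_ring)
  obtain ⟨C, hC⟩ :=
    isCompact_Icc.exists_bound_of_continuousOn (hFc.mul (hA.mono Icc_subset_Ici_self)).neg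
  have hzero := eq_zero_of_abs_deriv_le_mul_abs_self_of_eq_zero_right (K := Fintype.card n * C)
    (fun t ht => (hG t ht.1).continuousWithinAt.mono Icc_subset_Ici_self)
    (fun t ht => (hG t ht.1).mono (Ici_subset_Ici.2 ht.1)) (by simp [h₀]) fun t ht =>
      (Matrix.norm_mul_le_card_mul _ _).trans (by
        rw [← mul_assoc]
        gcongr
        exact hC t (Ico_subset_Icc_self ht))
  exact sub_eq_zero.1 (hzero b (right_mem_Icc.2 hb))

section Gram

variable {n : Type*} {φ : ℝ → n → ℝ}

noncomputable def gramIntegral (φ : ℝ → n → ℝ) (a b : ℝ) : Matrix n n ℝ :=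
  of fun i j => ∫ τ in a..b, φ τ i * φ τ j

@[simp]
theorem gramIntegral_self (a : ℝ) : gramIntegral φ a a = 0 := by
  ext; simp [gramIntegral]

theorem gramIntegral_add_gramIntegral (hφ : Continuous φ) (a b c : ℝ) :
    gramIntegral φ a b + gramIntegral φ b c = gramIntegral φ a c := by
  ext i j
  have hint (u v : ℝ) : IntervalIntegrable (fun τ => φ τ i * φ τ j) MeasureTheory.volume u v :=
    ((continuous_apply i).comp hφ |>.mul ((continuous_apply j).comp hφ)).intervalIntegrable u v
  exact intervalIntegral.integral_add_adjacent_intervals (hint a b) (hint b c)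

theorem hasDerivAt_gramIntegral [Fintype n] (hφ : Continuous φ) (a t : ℝ) :
    HasDerivAt (gramIntegral φ a) (vecMulVec (φ t) (φ t)) t := by
  refine hasDerivAt_pi.2 fun i => hasDerivAt_pi.2 fun j => ?_
  exact ((continuous_apply i).comp hφ |>.mul
    ((continuous_apply j).comp hφ)).integral_hasStrictDerivAt a t |>.hasDerivAt

theorem dotProduct_gramIntegral_mulVec [Fintype n] (hφ : Continuous φ) (a b : ℝ) (x : n → ℝ) :
    x ⬝ᵥ (gramIntegral φ a b *ᵥ x) = ∫ τ in a..b, (x ⬝ᵥ φ τ) ^ 2 := by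
  have hint (i j : n) : Continuous fun τ => x i * (φ τ i * φ τ j * x j) := by fun_prop
  calc x ⬝ᵥ (gramIntegral φ a b *ᵥ x)
      = ∑ i, ∑ j, ∫ τ in a..b, x i * (φ τ i * φ τ j * x j) := by
        simp only [dotProduct, mulVec, gramIntegral, of_apply, Finset.mul_sum,
          intervalIntegral.integral_const_mul, intervalIntegral.integral_mul_const]
    _ = ∫ τ in a..b, ∑ i, ∑ j, x i * (φ τ i * φ τ j * x j) := by
        rw [intervalIntegral.integral_finsetSum fun i _ =>
          (continuous_finsetSum _ fun j _ => hint i j).intervalIntegrable a b]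
        simp only [intervalIntegral.integral_finsetSum fun j _ =>
          (hint _ j).intervalIntegrable a b]
    _ = ∫ τ in a..b, (x ⬝ᵥ φ τ) ^ 2 := by
        refine intervalIntegral.integral_congr fun τ _ => ?_
        simp only [dotProduct, sq, Finset.sum_mul_sum]
        exact Finset.sum_congr rfl fun i _ => Finset.sum_congr rfl fun j _ => by ring

theorem posSemidef_gramIntegral [Fintype n] (hφ : Continuous φ) {a b : ℝ} (hab : a ≤ b) :
    (gramIntegral φ a b).PosSemidef := by
  refine .of_dotProduct_mulVec_nonneg ?_ fun x => ?_
  · ext i j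
    simp [gramIntegral, mul_comm]
  · rw [star_trivial, dotProduct_gramIntegral_mulVec hφ]
    exact intervalIntegral.integral_nonneg hab fun τ _ => sq_nonneg _

end Gram

namespace Matrix

variable {n : Type*} [Fintype n] [DecidableEq n]

theorem PosSemidef.inv_smul_one_sub_of_mul_eq_one {B F : Matrix n n ℝ} {β : ℝ} (hβ : 0 < β)
    (hB : (B - β • 1).PosSemidef) (hFB : F * B = 1) : (β⁻¹ • 1 - F).PosSemidef := by
  set D := B - β • 1 with hD
  have hBD : B = D + β • 1 := by rw [hD, sub_add_cancel]
  have hBF : B * F = 1 := mul_eq_one_comm.1 hFB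
  have hFH : Fᴴ = F := by
    have hBH : B.IsHermitian := hBD ▸ hB.isHermitian.add (isHermitian_one.smul (.all β))
    rw [← inv_eq_left_inv hFB]
    exact hBH.inv
  have hD2 : (D * D + β • D).PosSemidef := by
    have : (Dᴴ * D).PosSemidef := posSemidef_conjTranspose_mul_self D
    rw [hB.isHermitian.eq] at this
    exact this.add (hB.smul hβ.le)
  -- `β⁻¹ - B⁻¹ = B⁻¹ (β⁻¹ B (B - β)) B⁻¹`, and `B (B - β) = D² + β D` with `D = B - β ≥ 0`.
  have key : β⁻¹ • 1 - F = Fᴴ * (β⁻¹ • (D * D + β • D)) * F := by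
    have : β⁻¹ • (D * D + β • D) = β⁻¹ • (B * B) - B := by
      rw [hBD]
      simp only [Matrix.add_mul, Matrix.mul_add, Matrix.smul_mul, Matrix.mul_smul,
        Matrix.one_mul, Matrix.mul_one]
      match_scalars <;> field_simp <;> ring
    rw [hFH, this]
    simp only [Matrix.mul_sub, Matrix.sub_mul, Matrix.mul_smul, Matrix.smul_mul,
      ← Matrix.mul_assoc, hFB, Matrix.one_mul, hBF]
  rw [key]
  exact (hD2.smul (inv_nonneg.2 hβ.le)).conjTranspose_mul_mul_same F

theorem pow_card_le_det_of_posSemidef_sub_smul_one {A : Matrix n n ℝ} {c : ℝ} (hc : 0 ≤ c)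
    (h : (A - c • 1).PosSemidef) : c ^ Fintype.card n ≤ A.det := by
  have hA : A.IsHermitian := by
    simpa using h.isHermitian.add (isHermitian_one.smul (.all c))
  have hle (i : n) : c ≤ hA.eigenvalues i := by
    have hmem : hA.eigenvalues i - c ∈ spectrum ℝ (A - c • 1) := by
      rw [← Algebra.algebraMap_eq_smul_one, ← spectrum.sub_singleton_eq]
      exact Set.sub_mem_sub (hA.eigenvalues_mem_spectrum_real i) rfl
    simpa using (posSemidef_iff_isHermitian_and_spectrum_nonneg.1 h).2 hmem
  rw [hA.det_eq_prod_eigenvalues, ← Finset.card_univ, ← Finset.prod_const]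
  exact Finset.prod_le_prod (fun _ _ => hc) fun i _ => hle i

end Matrix

theorem statement19 {s : ℕ} (F : ℝ → Matrix (Fin s) (Fin s) ℝ) (φ : ℝ → Fin s → ℝ)
    (γ f₀ C_c t_c : ℝ) (hγ : 0 < γ) (hf₀ : 0 < f₀) (hCc : 0 < C_c) (htc : 0 < t_c)
    (hφc : Continuous φ)
    (hF0 : F 0 = (1 / f₀) • (1 : Matrix (Fin s) (Fin s) ℝ))
    (hODE : ∀ t ∈ Set.Ici (0:ℝ), ∀ i j,
      HasDerivWithinAt (fun τ => F τ i j)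
        ((-(γ • (F t * Matrix.vecMulVec (φ t) (φ t) * F t))) i j) (Set.Ici 0) t)
    (hIE : ((Matrix.of fun i j => ∫ τ in (0:ℝ)..t_c, φ τ i * φ τ j) -
      C_c • (1 : Matrix (Fin s) (Fin s) ℝ)).PosSemidef) :
    ∀ t, t_c ≤ t →
      (((1 : Matrix (Fin s) (Fin s) ℝ) - f₀ • F t) -
        (γ * C_c / (f₀ + γ * C_c)) • (1 : Matrix (Fin s) (Fin s) ℝ)).PosSemidef ∧
      (γ * C_c / (f₀ + γ * C_c)) ^ s ≤ ((1 : Matrix (Fin s) (Fin s) ℝ) - f₀ • F t).det ∧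
      0 < (γ * C_c / (f₀ + γ * C_c)) ^ s := by
  intro t ht
  set β := f₀ + γ * C_c with hβ
  set B : ℝ → Matrix (Fin s) (Fin s) ℝ := fun τ => f₀ • 1 + γ • gramIntegral φ 0 τ
  have hFB : F t * B t = 1 := by
    refine mul_eq_one_of_hasDerivWithinAt_riccati (A := fun τ => γ • vecMulVec (φ τ) (φ τ))
      (by fun_prop) (fun τ hτ => ?_) (fun τ _ => ?_) ?_ t (htc.le.trans ht)
    · simpa [Matrix.mul_smul, Matrix.smul_mul] using hasDerivWithinAt_matrix.2 (hODE τ hτ)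
    · exact (((hasDerivAt_gramIntegral hφc 0 τ).const_smul γ).const_add _).hasDerivWithinAt
    · simp [B, hF0, smul_smul, hf₀.ne']
  have hB : (B t - β • 1).PosSemidef := by
    have : B t - β • 1 = γ • (gramIntegral φ t_c t + (gramIntegral φ 0 t_c - C_c • 1)) := by
      rw [show B t = f₀ • 1 + γ • gramIntegral φ 0 t from rfl,
        ← gramIntegral_add_gramIntegral hφc 0 t_c t, hβ]
      module
    rw [this]
    exact ((posSemidef_gramIntegral hφc ht).add hIE).smul hγ.le
  have hF := hB.inv_smul_one_sub_of_mul_eq_one (by positivity) hFB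
  have hpsd : ((1 - f₀ • F t) - (γ * C_c / β) • 1).PosSemidef := by
    have : (1 - f₀ • F t) - (γ * C_c / β) • 1 = f₀ • (β⁻¹ • 1 - F t) := by
      have hscalar : f₀ * β⁻¹ = 1 - γ * C_c / β := by
        rw [hβ]
        field_simp
        ring
      rw [smul_sub, smul_smul, hscalar]
      module
    rw [this]
    exact hF.smul hf₀.le
  refine ⟨hpsd, ?_, by positivity⟩
  simpa using pow_card_le_det_of_posSemidef_sub_smul_one (by positivity) hpsd
end
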